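/- If W^T(p̄ − p̄_target) ≠ 0 in ℝ^d, then there exists δ ∈ ℝ^d with δ ≠ 0 such that L(δ, 1) < L(0, 1). -/

import Mathlib

noncomputable section

/-- The calibration loss `L(δ, T)`: the average over generation steps `s ∈ S` of
`log Σ_k exp(g_s(δ)_k / T) − g_s(δ)_{y_s} / T`, where `g_s(δ) = W (h_s + δ)`. -/
def calibLoss {d V : ℕ} {S : Type*} [Fintype S]
    (W : Matrix (Fin V) (Fin d) ℝ) (h : S → Fin d → ℝ) (y : S → Fin V)
    (δ : Fin d → ℝ) (T : ℝ) : ℝ :=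
  (Fintype.card S : ℝ)⁻¹ *
    ∑ s : S, (Real.log (∑ k : Fin V, Real.exp (W.mulVec (h s + δ) k / T))
      - W.mulVec (h s + δ) (y s) / T)

/-- `p_s = softmax_1(W h_s)`: the model's predictive distribution at temperature 1. -/
def softmax1 {d V : ℕ} {S : Type*}
    (W : Matrix (Fin V) (Fin d) ℝ) (h : S → Fin d → ℝ) (s : S) (k : Fin V) : ℝ :=
  Real.exp (W.mulVec (h s) k) / ∑ l : Fin V, Real.exp (W.mulVec (h s) l)

/-!
At `δ = 0` the derivative of `t ↦ L(t • v, 1)` is `⟪p̄ − p̄_target, W v⟫ = ⟪Wᵀ(p̄ − p̄_target), v⟫`,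
since the derivative of log-sum-exp is the softmax. If no `δ` beat `δ = 0`, then `t = 0` would
minimise `t ↦ L(t • g, 1)` for `g = Wᵀ(p̄ − p̄_target)`, forcing `⟪g, g⟫ = 0`. Any `δ` with
`L(δ, 1) < L(0, 1)` is automatically nonzero.
-/

open Matrix

def logSumExp {ι : Type*} [Fintype ι] (z : ι → ℝ) : ℝ :=
  Real.log (∑ k, Real.exp (z k))

def softmax {ι : Type*} [Fintype ι] (z : ι → ℝ) (k : ι) : ℝ :=
  Real.exp (z k) / ∑ l, Real.exp (z l)

theorem hasDerivAt_logSumExp_add_smul {ι : Type*} [Fintype ι] [Nonempty ι]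
    (a b : ι → ℝ) (t : ℝ) :
    HasDerivAt (fun t : ℝ => logSumExp (a + t • b)) (softmax (a + t • b) ⬝ᵥ b) t := by
  have hsum : HasDerivAt (fun t => ∑ k, Real.exp (a k + t * b k))
      (∑ k, Real.exp (a k + t * b k) * b k) t :=
    HasDerivAt.fun_sum fun k _ => ((hasDerivAt_mul_const (b k)).const_add (a k)).exp
  have hpos : 0 < ∑ k, Real.exp (a k + t * b k) :=
    Finset.sum_pos (fun k _ => Real.exp_pos _) Finset.univ_nonempty
  convert hsum.log hpos.ne' using 1
  · simp [logSumExp]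
  · simp [softmax, dotProduct, Finset.sum_div, div_mul_eq_mul_div]

def calibResidual {d V : ℕ} {S : Type*} [Fintype S]
    (W : Matrix (Fin V) (Fin d) ℝ) (h : S → Fin d → ℝ) (y : S → Fin V) (k : Fin V) : ℝ :=
  ((Fintype.card S : ℝ)⁻¹ * ∑ s : S, softmax1 W h s k)
    - ((Fintype.card S : ℝ)⁻¹ * ∑ s : S, if y s = k then (1 : ℝ) else 0)

theorem calibResidual_dotProduct {d V : ℕ} {S : Type*} [Fintype S]
    (W : Matrix (Fin V) (Fin d) ℝ) (h : S → Fin d → ℝ) (y : S → Fin V) (b : Fin V → ℝ) :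
    calibResidual W h y ⬝ᵥ b
      = (Fintype.card S : ℝ)⁻¹ * ∑ s, (softmax (W *ᵥ h s) ⬝ᵥ b - b (y s)) := by
  simp only [calibResidual, dotProduct, softmax, softmax1, sub_mul, Finset.sum_sub_distrib,
    mul_sub, Finset.mul_sum, Finset.sum_mul, mul_assoc, ite_mul, one_mul, zero_mul,
    mul_ite, mul_zero]
  congr 1
  · exact Finset.sum_comm
  · rw [Finset.sum_comm]
    simp

theorem hasDerivAt_calibLoss_smul {d V : ℕ} [NeZero V] {S : Type*} [Fintype S]
    (W : Matrix (Fin V) (Fin d) ℝ) (h : S → Fin d → ℝ) (y : S → Fin V) (v : Fin d → ℝ) :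
    HasDerivAt (fun t : ℝ => calibLoss W h y (t • v) 1)
      (calibResidual W h y ⬝ᵥ (W *ᵥ v)) 0 := by
  have hterm : ∀ s, HasDerivAt
      (fun t : ℝ => logSumExp (W *ᵥ h s + t • W *ᵥ v) - ((W *ᵥ h s) (y s) + t * (W *ᵥ v) (y s)))
      (softmax (W *ᵥ h s) ⬝ᵥ (W *ᵥ v) - (W *ᵥ v) (y s)) 0 := fun s => by
    simpa using (hasDerivAt_logSumExp_add_smul (W *ᵥ h s) (W *ᵥ v) 0).fun_sub
      ((hasDerivAt_mul_const ((W *ᵥ v) (y s))).const_add ((W *ᵥ h s) (y s)))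
  have hloss : (fun t : ℝ => calibLoss W h y (t • v) 1) = fun t => (Fintype.card S : ℝ)⁻¹ *
      ∑ s, (logSumExp (W *ᵥ h s + t • W *ᵥ v) - ((W *ᵥ h s) (y s) + t * (W *ᵥ v) (y s))) := by
    funext t
    simp [calibLoss, logSumExp, mulVec_add, mulVec_smul]
  rw [calibResidual_dotProduct, hloss]
  exact (HasDerivAt.fun_sum fun s _ => hterm s).const_mul _

theorem exists_improving_delta_general {d V : ℕ} (hV : 1 ≤ V)
    {S : Type*} [Fintype S]
    (W : Matrix (Fin V) (Fin d) ℝ) (h : S → Fin d → ℝ) (y : S → Fin V)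
    (hyp :
      W.transpose.mulVec
          (fun k => ((Fintype.card S : ℝ)⁻¹ * ∑ s : S, softmax1 W h s k)
            - ((Fintype.card S : ℝ)⁻¹ * ∑ s : S, if y s = k then (1 : ℝ) else 0)) ≠ 0) :
    ∃ δ : Fin d → ℝ, δ ≠ 0 ∧ calibLoss W h y δ 1 < calibLoss W h y 0 1 := by
  have : NeZero V := ⟨by omega⟩
  set g := Wᵀ *ᵥ calibResidual W h y
  by_contra! hmin
  have hlocal : IsLocalMin (fun t : ℝ => calibLoss W h y (t • g) 1) 0 :=
    Filter.Eventually.of_forall fun t => by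
      by_cases ht : t • g = 0
      · simp [ht]
      · simpa using hmin _ ht
  have hg := hlocal.hasDerivAt_eq_zero (hasDerivAt_calibLoss_smul W h y g)
  rw [dotProduct_mulVec, ← mulVec_transpose] at hg
  exact hyp (dotProduct_self_eq_zero.mp hg)

/-- If `Wᵀ (p̄ − p̄_target) ≠ 0` in `ℝ^d`, then there exists `δ ≠ 0` with
`L(δ, 1) < L(0, 1)`. -/
theorem exists_improving_delta {d V : ℕ} (hV : 1 ≤ V)
    {S : Type*} [Fintype S] [Nonempty S]
    (W : Matrix (Fin V) (Fin d) ℝ) (h : S → Fin d → ℝ) (y : S → Fin V)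
    (hyp :
      W.transpose.mulVec
          (fun k => ((Fintype.card S : ℝ)⁻¹ * ∑ s : S, softmax1 W h s k)
            - ((Fintype.card S : ℝ)⁻¹ * ∑ s : S, if y s = k then (1 : ℝ) else 0)) ≠ 0) :
    ∃ δ : Fin d → ℝ, δ ≠ 0 ∧ calibLoss W h y δ 1 < calibLoss W h y 0 1 :=
  exists_improving_delta_general hV W h y hyp

end
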